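/- Suppose in addition to the stochastic compliance class IV assumptions that stochastic monotonicity holds: w(u) = P(D=1|Z=1,U=u) − P(D=1|Z=0,U=u) ≥ 0 for all u, and E[w(U)] > 0. If there exists c > 0 such that E[Y(1)−Y(0) | U=u] ≥ c for every u, then (E[Y|Z=1] − E[Y|Z=0]) / (P(D=1|Z=1) − P(D=1|Z=0)) ≥ c. In particular, under monotonicity the Wald ratio cannot reverse the sign of a uniformly positive treatment effect. -/
import Mathlib


open Finset
open scoped Classical

/-- Probability of an event `A` under mass function `p` on a finite sample space. -/
noncomputable def prb {Ω : Type*} [Fintype Ω] (p : Ω → ℝ) (A : Ω → Prop) : ℝ :=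
  ∑ ω, if A ω then p ω else 0

/-- Expectation of a real random variable `X` under mass function `p`. -/
noncomputable def exv {Ω : Type*} [Fintype Ω] (p : Ω → ℝ) (X : Ω → ℝ) : ℝ :=
  ∑ ω, p ω * X ω

/-- Conditional probability `P(A | B)`. -/
noncomputable def cpr {Ω : Type*} [Fintype Ω] (p : Ω → ℝ) (A B : Ω → Prop) : ℝ :=
  prb p (fun ω => A ω ∧ B ω) / prb p B

/-- Conditional expectation `E[X | B]`. -/
noncomputable def cex {Ω : Type*} [Fintype Ω] (p : Ω → ℝ) (X : Ω → ℝ) (B : Ω → Prop) : ℝ :=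
  (∑ ω, if B ω then p ω * X ω else 0) / prb p B

/-- Restricted expectation `E[X · 1_A]`. -/
noncomputable def ex2 {Ω : Type*} [Fintype Ω] (p : Ω → ℝ) (X : Ω → ℝ) (A : Ω → Prop) : ℝ :=
  ∑ ω, if A ω then p ω * X ω else 0

section Aux
variable {Ω ι : Type*} [Fintype Ω] [Fintype ι]

lemma prb_congr' (p : Ω → ℝ) {A B : Ω → Prop} (h : ∀ ω, A ω ↔ B ω) :
    prb p A = prb p B := by
  unfold prb; exact Finset.sum_congr rfl fun ω _ => by simp [h ω]

lemma prb_nonneg' (p : Ω → ℝ) (hp : ∀ ω, 0 ≤ p ω) (A : Ω → Prop) : 0 ≤ prb p A := by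
  unfold prb
  exact Finset.sum_nonneg fun ω _ => by split <;> simp [hp ω]

lemma prb_eq_ex2_one (p : Ω → ℝ) (A : Ω → Prop) : prb p A = ex2 p (fun _ => 1) A := by
  unfold prb ex2
  exact Finset.sum_congr rfl fun ω _ => by by_cases h : A ω <;> simp [h]

lemma sum_collapse' (Y1 Y0 : Ω → ℝ) (ω : Ω) (f : ℝ → ℝ → ℝ) :
    (∑ y1 ∈ univ.image Y1, ∑ y0 ∈ univ.image Y0,
      if Y1 ω = y1 ∧ Y0 ω = y0 then f y1 y0 else 0) = f (Y1 ω) (Y0 ω) := by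
  have h1 : ∀ y1 ∈ univ.image Y1, (∑ y0 ∈ univ.image Y0,
      if Y1 ω = y1 ∧ Y0 ω = y0 then f y1 y0 else 0)
      = if y1 = Y1 ω then f y1 (Y0 ω) else 0 := by
    intro y1 _
    by_cases h : y1 = Y1 ω
    · subst h
      simp only [true_and, eq_comm (a := Y0 ω)]
      rw [Finset.sum_ite_eq' (univ.image Y0) (Y0 ω)]
      simp
    · rw [if_neg h]
      apply Finset.sum_eq_zero
      intro y0 _
      rw [if_neg]
      rintro ⟨h1, -⟩; exact h h1.symm
  rw [Finset.sum_congr rfl h1, Finset.sum_ite_eq' (univ.image Y1) (Y1 ω)]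
  simp

lemma master' (p : Ω → ℝ) (Y1 Y0 : Ω → ℝ) (R : Ω → Prop) (g : ℝ → ℝ → ℝ) :
    (∑ ω, if R ω then p ω * g (Y1 ω) (Y0 ω) else 0) =
    ∑ y1 ∈ univ.image Y1, ∑ y0 ∈ univ.image Y0,
      g y1 y0 * prb p (fun ω => Y1 ω = y1 ∧ Y0 ω = y0 ∧ R ω) := by
  have key : ∀ ω, (if R ω then p ω * g (Y1 ω) (Y0 ω) else 0) =
      ∑ y1 ∈ univ.image Y1, ∑ y0 ∈ univ.image Y0,
        if Y1 ω = y1 ∧ Y0 ω = y0 ∧ R ω then g y1 y0 * p ω else 0 := by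
    intro ω
    have h : ∀ y1 y0 : ℝ, (if Y1 ω = y1 ∧ Y0 ω = y0 ∧ R ω then g y1 y0 * p ω else 0)
        = if Y1 ω = y1 ∧ Y0 ω = y0 then (if R ω then g y1 y0 * p ω else 0) else 0 := by
      intro y1 y0
      by_cases h1 : Y1 ω = y1 ∧ Y0 ω = y0 <;> by_cases h2 : R ω <;>
        simp [h1, h2, and_assoc]
    simp only [h]
    rw [sum_collapse']
    by_cases h2 : R ω <;> simp [h2, mul_comm]
  calc (∑ ω, if R ω then p ω * g (Y1 ω) (Y0 ω) else 0)
      = ∑ ω, ∑ y1 ∈ univ.image Y1, ∑ y0 ∈ univ.image Y0,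
          if Y1 ω = y1 ∧ Y0 ω = y0 ∧ R ω then g y1 y0 * p ω else 0 :=
        Finset.sum_congr rfl fun ω _ => key ω
    _ = ∑ y1 ∈ univ.image Y1, ∑ ω, ∑ y0 ∈ univ.image Y0,
          if Y1 ω = y1 ∧ Y0 ω = y0 ∧ R ω then g y1 y0 * p ω else 0 := Finset.sum_comm
    _ = ∑ y1 ∈ univ.image Y1, ∑ y0 ∈ univ.image Y0, ∑ ω,
          if Y1 ω = y1 ∧ Y0 ω = y0 ∧ R ω then g y1 y0 * p ω else 0 :=
        Finset.sum_congr rfl fun y1 _ => Finset.sum_comm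
    _ = ∑ y1 ∈ univ.image Y1, ∑ y0 ∈ univ.image Y0,
          g y1 y0 * prb p (fun ω => Y1 ω = y1 ∧ Y0 ω = y0 ∧ R ω) := by
        apply Finset.sum_congr rfl; intro y1 _
        apply Finset.sum_congr rfl; intro y0 _
        unfold prb
        rw [Finset.mul_sum]
        exact Finset.sum_congr rfl fun ω _ => by split <;> simp

lemma master2 (p : Ω → ℝ) (Y1 Y0 X : Ω → ℝ) (g : ℝ → ℝ → ℝ)
    (hX : ∀ ω, X ω = g (Y1 ω) (Y0 ω)) (R : Ω → Prop) :
    ex2 p X R = ∑ y1 ∈ univ.image Y1, ∑ y0 ∈ univ.image Y0,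
      g y1 y0 * prb p (fun ω => Y1 ω = y1 ∧ Y0 ω = y0 ∧ R ω) := by
  unfold ex2
  have h : (∑ ω, if R ω then p ω * X ω else 0) =
      ∑ ω, if R ω then p ω * g (Y1 ω) (Y0 ω) else 0 :=
    Finset.sum_congr rfl fun ω _ => by rw [hX ω]
  exact h.trans (master' p Y1 Y0 R g)

lemma partitionU' (U : Ω → ι) (h : Ω → ℝ) :
    ∑ ω, h ω = ∑ u, ∑ ω, (if U ω = u then h ω else 0) := by
  rw [Finset.sum_comm]
  apply Finset.sum_congr rfl
  intro ω _
  rw [Finset.sum_ite_eq (univ : Finset ι) (U ω)]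
  simp

lemma ex2_partition (p : Ω → ℝ) (U : Ω → ι) (X : Ω → ℝ) (A : Ω → Prop) :
    ex2 p X A = ∑ u, ex2 p X (fun ω => A ω ∧ U ω = u) := by
  unfold ex2
  refine (partitionU' U (fun ω => if A ω then p ω * X ω else 0)).trans ?_
  refine Finset.sum_congr rfl fun u _ => Finset.sum_congr rfl fun ω _ => ?_
  by_cases h1 : A ω <;> by_cases h2 : U ω = u <;> simp [h1, h2]

lemma prb_partition (p : Ω → ℝ) (U : Ω → ι) (A : Ω → Prop) :
    prb p A = ∑ u, prb p (fun ω => A ω ∧ U ω = u) := by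
  unfold prb
  refine (partitionU' U (fun ω => if A ω then p ω else 0)).trans ?_
  refine Finset.sum_congr rfl fun u _ => Finset.sum_congr rfl fun ω _ => ?_
  by_cases h1 : A ω <;> by_cases h2 : U ω = u <;> simp [h1, h2]

end Aux

/-- under stochastic monotonicity, a uniformly positive effect cannot
have its sign reversed by the Wald ratio. -/
theorem stmt4 {Ω ι : Type*} [Fintype Ω] [Fintype ι]
    (p : Ω → ℝ) (hp : ∀ ω, 0 ≤ p ω) (hpsum : ∑ ω, p ω = 1)
    (Z D Y Y1 Y0 : Ω → ℝ) (U : Ω → ι)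
    (hZbin : ∀ ω, Z ω = 0 ∨ Z ω = 1) (hDbin : ∀ ω, D ω = 0 ∨ D ω = 1)
    (hYobs : ∀ ω, Y ω = D ω * Y1 ω + (1 - D ω) * Y0 ω)
    (hpos : ∀ (z : ℝ) (u : ι), (z = 0 ∨ z = 1) →
      0 < prb p (fun ω => Z ω = z ∧ U ω = u))
    (hindep : ∀ (y1 y0 : ℝ) (u : ι) (z : ℝ),
      prb p (fun ω => Y1 ω = y1 ∧ Y0 ω = y0 ∧ U ω = u ∧ Z ω = z) =
        prb p (fun ω => Y1 ω = y1 ∧ Y0 ω = y0 ∧ U ω = u) * prb p (fun ω => Z ω = z))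
    (hcind : ∀ (y1 y0 d z : ℝ) (u : ι),
      cpr p (fun ω => Y1 ω = y1 ∧ Y0 ω = y0 ∧ D ω = d) (fun ω => Z ω = z ∧ U ω = u) =
        cpr p (fun ω => Y1 ω = y1 ∧ Y0 ω = y0) (fun ω => Z ω = z ∧ U ω = u) *
          cpr p (fun ω => D ω = d) (fun ω => Z ω = z ∧ U ω = u))
    (w : ι → ℝ)
    (hw : ∀ u, w u = cpr p (fun ω => D ω = 1) (fun ω => Z ω = 1 ∧ U ω = u) -
                    cpr p (fun ω => D ω = 1) (fun ω => Z ω = 0 ∧ U ω = u))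
    (hZ1 : 0 < prb p (fun ω => Z ω = 1)) (hZ0 : 0 < prb p (fun ω => Z ω = 0))
    (hmono : ∀ u, 0 ≤ w u) (hEw : 0 < exv p (fun ω => w (U ω)))
    (c : ℝ) (hc : 0 < c)
    (hτ : ∀ u : ι, c ≤ cex p (fun ω => Y1 ω - Y0 ω) (fun ω => U ω = u)) :
    c ≤ (cex p Y (fun ω => Z ω = 1) - cex p Y (fun ω => Z ω = 0)) /
        (cpr p (fun ω => D ω = 1) (fun ω => Z ω = 1) -
          cpr p (fun ω => D ω = 1) (fun ω => Z ω = 0)) := by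
  set π : ℝ → ι → ℝ :=
    fun z u => cpr p (fun ω => D ω = 1) (fun ω => Z ω = z ∧ U ω = u) with hπ
  -- generic independence transfer
  have hstep2 : ∀ (X : Ω → ℝ) (g : ℝ → ℝ → ℝ), (∀ ω, X ω = g (Y1 ω) (Y0 ω)) →
      ∀ (z : ℝ) (u : ι),
      ex2 p X (fun ω => Z ω = z ∧ U ω = u) =
      ex2 p X (fun ω => U ω = u) * prb p (fun ω => Z ω = z) := by
    intro X g hX z u
    rw [master2 p Y1 Y0 X g hX (fun ω => Z ω = z ∧ U ω = u),
        master2 p Y1 Y0 X g hX (fun ω => U ω = u), Finset.sum_mul]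
    refine Finset.sum_congr rfl fun y1 _ => ?_
    rw [Finset.sum_mul]
    refine Finset.sum_congr rfl fun y0 _ => ?_
    rw [mul_assoc]
    exact congrArg (g y1 y0 * ·)
      ((prb_congr' p fun ω => by tauto).trans (hindep y1 y0 u z))
  have hstep1 : ∀ (z : ℝ) (u : ι), prb p (fun ω => Z ω = z ∧ U ω = u) =
      prb p (fun ω => U ω = u) * prb p (fun ω => Z ω = z) := by
    intro z u
    rw [prb_eq_ex2_one p (fun ω => Z ω = z ∧ U ω = u),
        prb_eq_ex2_one p (fun ω => U ω = u),
        hstep2 (fun _ => (1 : ℝ)) (fun _ _ => (1 : ℝ)) (fun _ => rfl) z u]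
  have hPu : ∀ u, 0 < prb p (fun ω => U ω = u) := by
    intro u
    have h := hpos 1 u (Or.inr rfl)
    rw [hstep1 1 u] at h
    nlinarith [prb_nonneg' p hp (fun ω => U ω = u)]
  have hPzu : ∀ (z : ℝ) (u : ι), (z = 0 ∨ z = 1) →
      prb p (fun ω => Z ω = z ∧ U ω = u) ≠ 0 := fun z u hz => ne_of_gt (hpos z u hz)
  have hPzne : ∀ (z : ℝ), (z = 0 ∨ z = 1) → prb p (fun ω => Z ω = z) ≠ 0 := by
    intro z hz
    rcases hz with h | h <;> subst h
    · exact ne_of_gt hZ0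
    · exact ne_of_gt hZ1
  -- conditional independence transfer
  have hjoint : ∀ (y1 y0 z : ℝ) (u : ι), (z = 0 ∨ z = 1) →
      prb p (fun ω => Y1 ω = y1 ∧ Y0 ω = y0 ∧ ((Z ω = z ∧ U ω = u) ∧ D ω = 1)) =
      prb p (fun ω => Y1 ω = y1 ∧ Y0 ω = y0 ∧ U ω = u) *
        prb p (fun ω => Z ω = z) * π z u := by
    intro y1 y0 z u hz
    have hne := hPzu z u hz
    have e1 : prb p (fun ω => Y1 ω = y1 ∧ Y0 ω = y0 ∧ ((Z ω = z ∧ U ω = u) ∧ D ω = 1)) =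
        cpr p (fun ω => Y1 ω = y1 ∧ Y0 ω = y0 ∧ D ω = 1) (fun ω => Z ω = z ∧ U ω = u) *
          prb p (fun ω => Z ω = z ∧ U ω = u) := by
      unfold cpr
      rw [div_mul_cancel₀ _ hne]
      exact prb_congr' p fun ω => by tauto
    have e2 : cpr p (fun ω => Y1 ω = y1 ∧ Y0 ω = y0) (fun ω => Z ω = z ∧ U ω = u) *
        prb p (fun ω => Z ω = z ∧ U ω = u) =
        prb p (fun ω => Y1 ω = y1 ∧ Y0 ω = y0 ∧ U ω = u) * prb p (fun ω => Z ω = z) := by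
      unfold cpr
      rw [div_mul_cancel₀ _ hne, ← hindep y1 y0 u z]
      exact prb_congr' p fun ω => by tauto
    rw [e1, hcind y1 y0 1 z u]
    calc cpr p (fun ω => Y1 ω = y1 ∧ Y0 ω = y0) (fun ω => Z ω = z ∧ U ω = u) *
          cpr p (fun ω => D ω = 1) (fun ω => Z ω = z ∧ U ω = u) *
          prb p (fun ω => Z ω = z ∧ U ω = u)
        = cpr p (fun ω => Y1 ω = y1 ∧ Y0 ω = y0) (fun ω => Z ω = z ∧ U ω = u) *
            prb p (fun ω => Z ω = z ∧ U ω = u) * π z u := by rw [hπ]; ring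
      _ = prb p (fun ω => Y1 ω = y1 ∧ Y0 ω = y0 ∧ U ω = u) *
            prb p (fun ω => Z ω = z) * π z u := by rw [e2]
  -- the treatment part
  have hA : ∀ (z : ℝ) (u : ι), (z = 0 ∨ z = 1) →
      ex2 p (fun ω => Y1 ω - Y0 ω) (fun ω => (Z ω = z ∧ U ω = u) ∧ D ω = 1) =
      ex2 p (fun ω => Y1 ω - Y0 ω) (fun ω => U ω = u) *
        prb p (fun ω => Z ω = z) * π z u := by
    intro z u hz
    rw [master2 p Y1 Y0 (fun ω => Y1 ω - Y0 ω) (fun a b => a - b) (fun _ => rfl)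
          (fun ω => (Z ω = z ∧ U ω = u) ∧ D ω = 1),
        master2 p Y1 Y0 (fun ω => Y1 ω - Y0 ω) (fun a b => a - b) (fun _ => rfl)
          (fun ω => U ω = u),
        Finset.sum_mul, Finset.sum_mul]
    refine Finset.sum_congr rfl fun y1 _ => ?_
    rw [Finset.sum_mul, Finset.sum_mul]
    refine Finset.sum_congr rfl fun y0 _ => ?_
    show (y1 - y0) *
        prb p (fun ω => Y1 ω = y1 ∧ Y0 ω = y0 ∧ ((Z ω = z ∧ U ω = u) ∧ D ω = 1)) =
      (y1 - y0) * prb p (fun ω => Y1 ω = y1 ∧ Y0 ω = y0 ∧ U ω = u) *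
        prb p (fun ω => Z ω = z) * π z u
    rw [hjoint y1 y0 z u hz]
    ring
  -- splitting Y
  have hYsplit : ∀ (z : ℝ) (u : ι),
      ex2 p Y (fun ω => Z ω = z ∧ U ω = u) =
      ex2 p (fun ω => Y1 ω - Y0 ω) (fun ω => (Z ω = z ∧ U ω = u) ∧ D ω = 1) +
      ex2 p Y0 (fun ω => Z ω = z ∧ U ω = u) := by
    intro z u
    unfold ex2
    rw [← Finset.sum_add_distrib]
    refine Finset.sum_congr rfl fun ω _ => ?_
    rcases hDbin ω with h | h <;> by_cases h2 : Z ω = z ∧ U ω = u <;>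
      simp [hYobs ω, h, h2] <;> ring
  -- conditional expectation of Y given Z = z
  have hcexZ : ∀ (z : ℝ), (z = 0 ∨ z = 1) →
      cex p Y (fun ω => Z ω = z) =
      ∑ u, (ex2 p (fun ω => Y1 ω - Y0 ω) (fun ω => U ω = u) * π z u +
            ex2 p Y0 (fun ω => U ω = u)) := by
    intro z hz
    have e : cex p Y (fun ω => Z ω = z) =
        ex2 p Y (fun ω => Z ω = z) / prb p (fun ω => Z ω = z) := rfl
    have hpartY : ex2 p Y (fun ω => Z ω = z) =
        ∑ u, ex2 p Y (fun ω => Z ω = z ∧ U ω = u) :=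
      ex2_partition p U Y (fun ω => Z ω = z)
    have hterm : ∀ u : ι, ex2 p Y (fun ω => Z ω = z ∧ U ω = u) =
        (ex2 p (fun ω => Y1 ω - Y0 ω) (fun ω => U ω = u) * π z u +
          ex2 p Y0 (fun ω => U ω = u)) * prb p (fun ω => Z ω = z) := by
      intro u
      rw [hYsplit z u, hA z u hz, hstep2 Y0 (fun _ b => b) (fun _ => rfl) z u]
      ring
    rw [e, hpartY, Finset.sum_congr rfl (fun u _ => hterm u), ← Finset.sum_mul,
        mul_div_cancel_right₀ _ (hPzne z hz)]
  -- the denominator decomposition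
  have hpi_mul : ∀ (z : ℝ) (u : ι), (z = 0 ∨ z = 1) →
      prb p (fun ω => D ω = 1 ∧ (Z ω = z ∧ U ω = u)) =
      prb p (fun ω => U ω = u) * π z u * prb p (fun ω => Z ω = z) := by
    intro z u hz
    have hne := hPzu z u hz
    have e : prb p (fun ω => D ω = 1 ∧ (Z ω = z ∧ U ω = u)) =
        π z u * prb p (fun ω => Z ω = z ∧ U ω = u) :=
      (div_mul_cancel₀
        (prb p (fun ω => D ω = 1 ∧ (Z ω = z ∧ U ω = u))) hne).symm
    rw [e, hstep1 z u]
    ring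
  have hden : ∀ (z : ℝ), (z = 0 ∨ z = 1) →
      cpr p (fun ω => D ω = 1) (fun ω => Z ω = z) =
      ∑ u, prb p (fun ω => U ω = u) * π z u := by
    intro z hz
    have e : cpr p (fun ω => D ω = 1) (fun ω => Z ω = z) =
        prb p (fun ω => D ω = 1 ∧ Z ω = z) / prb p (fun ω => Z ω = z) := rfl
    have h1 : prb p (fun ω => D ω = 1 ∧ Z ω = z) =
        ∑ u, prb p (fun ω => D ω = 1 ∧ (Z ω = z ∧ U ω = u)) := by
      refine (prb_partition p U (fun ω => D ω = 1 ∧ Z ω = z)).trans ?_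
      exact Finset.sum_congr rfl fun u _ => prb_congr' p fun ω => by tauto
    rw [e, h1, Finset.sum_congr rfl (fun u _ => hpi_mul z u hz), ← Finset.sum_mul,
        mul_div_cancel_right₀ _ (hPzne z hz)]
  -- E[w(U)]
  have hEwsum : exv p (fun ω => w (U ω)) = ∑ u, prb p (fun ω => U ω = u) * w u := by
    unfold exv prb
    refine (partitionU' U (fun ω => p ω * w (U ω))).trans ?_
    refine Finset.sum_congr rfl fun u _ => ?_
    rw [Finset.sum_mul]
    refine Finset.sum_congr rfl fun ω _ => ?_
    by_cases h : U ω = u <;> simp [h]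
  have hDm : cpr p (fun ω => D ω = 1) (fun ω => Z ω = 1) -
      cpr p (fun ω => D ω = 1) (fun ω => Z ω = 0) =
      ∑ u, prb p (fun ω => U ω = u) * w u := by
    rw [hden 1 (Or.inr rfl), hden 0 (Or.inl rfl), ← Finset.sum_sub_distrib]
    refine Finset.sum_congr rfl fun u _ => ?_
    rw [hw u, hπ]
    ring
  have hDmpos : 0 < cpr p (fun ω => D ω = 1) (fun ω => Z ω = 1) -
      cpr p (fun ω => D ω = 1) (fun ω => Z ω = 0) := by
    rw [hDm, ← hEwsum]; exact hEw
  have hNum : cex p Y (fun ω => Z ω = 1) - cex p Y (fun ω => Z ω = 0) =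
      ∑ u, ex2 p (fun ω => Y1 ω - Y0 ω) (fun ω => U ω = u) * w u := by
    rw [hcexZ 1 (Or.inr rfl), hcexZ 0 (Or.inl rfl), ← Finset.sum_sub_distrib]
    refine Finset.sum_congr rfl fun u _ => ?_
    rw [hw u, hπ]
    ring
  rw [le_div_iff₀ hDmpos, hNum, hDm, Finset.mul_sum]
  apply Finset.sum_le_sum
  intro u _
  have hMu : ex2 p (fun ω => Y1 ω - Y0 ω) (fun ω => U ω = u) =
      cex p (fun ω => Y1 ω - Y0 ω) (fun ω => U ω = u) * prb p (fun ω => U ω = u) := by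
    have e : cex p (fun ω => Y1 ω - Y0 ω) (fun ω => U ω = u) =
        ex2 p (fun ω => Y1 ω - Y0 ω) (fun ω => U ω = u) /
          prb p (fun ω => U ω = u) := rfl
    rw [e, div_mul_cancel₀ _ (ne_of_gt (hPu u))]
  rw [hMu]
  calc c * (prb p (fun ω => U ω = u) * w u)
      ≤ cex p (fun ω => Y1 ω - Y0 ω) (fun ω => U ω = u) *
          (prb p (fun ω => U ω = u) * w u) :=
        mul_le_mul_of_nonneg_right (hτ u) (mul_nonneg (hPu u).le (hmono u))
    _ = cex p (fun ω => Y1 ω - Y0 ω) (fun ω => U ω = u) *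
          prb p (fun ω => U ω = u) * w u := by ring
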